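/- arXiv:2206.12701 — 2 statements merged into one kernel-verified Lean document; each statement's English description precedes it below -/
import Mathlib

section
/- Under the bandwagon rating process, the variance of the sample mean satisfies the recursion Var[p̄_n] = ((n-1)(n+1-2λ_n)/n²) · Var[p̄_{n-1}] + p(1-p)/n², with Var[p̄_1] = p(1-p). -/
open MeasureTheory ProbabilityTheory Finset Filter

/-- Sample mean of the first `n` ratings (ratings are indexed from 1). -/
noncomputable def pbar {Ω : Type*} (r : ℕ → Ω → ℝ) (n : ℕ) (ω : Ω) : ℝ :=
  (∑ i ∈ Finset.Icc 1 n, r i ω) / n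

/-- σ-algebra generated by the first `n` ratings. -/
def ratingsAlg {Ω : Type*} (r : ℕ → Ω → ℝ) (n : ℕ) : MeasurableSpace Ω :=
  ⨆ i ∈ Finset.Icc 1 n, MeasurableSpace.comap (r i) (inferInstance : MeasurableSpace ℝ)

/-- The bandwagon rating process of Xie et al., as used in the paper. -/
structure Bandwagon {Ω : Type*} [MeasurableSpace Ω] (μ : Measure Ω)
    (p : ℝ) (lam : ℕ → ℝ) (r : ℕ → Ω → ℝ) : Prop where
  prob : IsProbabilityMeasure μ
  hp : 0 < p ∧ p < 1
  hlam1 : lam 1 = 1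
  hlam_nonneg : ∀ n, 1 ≤ n → 0 ≤ lam n
  hlam_mono : ∀ n, 2 ≤ n → lam n ≤ lam (n - 1)
  hmeas : ∀ n, Measurable (r n)
  hbin : ∀ n, 1 ≤ n → ∀ ω, r n ω = 0 ∨ r n ω = 1
  hfirst : ∫ ω, r 1 ω ∂μ = p
  hcond : ∀ n, 2 ≤ n →
    μ[r n | ratingsAlg r (n - 1)] =ᵐ[μ]
      fun ω => lam n * p + (1 - lam n) * pbar r (n - 1) ω

/-- Affine-corrected rating `r̂ᵢ`. -/
noncomputable def rhat {Ω : Type*} (r : ℕ → Ω → ℝ) (lam : ℕ → ℝ) (i : ℕ) (ω : Ω) : ℝ :=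
  (r i ω - (1 - lam i) * pbar r (i - 1) ω) / lam i

/-!
Write `p̄ₙ = ((n - 1) p̄ₙ₋₁ + rₙ) / n`. Because `p̄ₙ₋₁` is measurable with respect to the first
`n - 1` ratings and `E[rₙ | r₁, …, rₙ₋₁] = λₙ p + (1 - λₙ) p̄ₙ₋₁`, pulling `p̄ₙ₋₁` out of the
conditional expectation gives `Cov(p̄ₙ₋₁, rₙ) = (1 - λₙ) Var p̄ₙ₋₁`. The same tower argument shows
inductively that every rating has mean `p`, so the Bernoulli variable `rₙ` has variance `p (1 - p)`.
Expanding the variance of the sum, the coefficient of `Var p̄ₙ₋₁` is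
`(n - 1)² + 2 (n - 1)(1 - λₙ) = (n - 1)(n + 1 - 2 λₙ)`.
-/

section SampleMean

variable {Ω : Type*} (r : ℕ → Ω → ℝ)

lemma pbar_one : pbar r 1 = r 1 := by
  ext ω
  simp [pbar]

lemma pbar_succ (n : ℕ) :
    pbar r (n + 1) = ((n : ℝ) + 1)⁻¹ • ((n : ℝ) • pbar r n + r (n + 1)) := by
  ext ω
  rcases Nat.eq_zero_or_pos n with rfl | hn
  · simp [pbar]
  · simp only [pbar, Pi.smul_apply, Pi.add_apply, smul_eq_mul, Finset.sum_Icc_succ_top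
      (Nat.le_add_left 1 n)]
    push_cast
    field_simp

lemma pbar_mem_Icc {r : ℕ → Ω → ℝ} (hr : ∀ i, 1 ≤ i → ∀ ω, r i ω ∈ Set.Icc (0 : ℝ) 1)
    (n : ℕ) (ω : Ω) : pbar r n ω ∈ Set.Icc (0 : ℝ) 1 := by
  rcases Nat.eq_zero_or_pos n with rfl | hn
  · simp [pbar]
  have hn' : (0 : ℝ) < n := by exact_mod_cast hn
  have hsum : ∑ i ∈ Finset.Icc 1 n, r i ω ∈ Set.Icc (0 : ℝ) n := by
    constructor
    · exact Finset.sum_nonneg fun i hi => (hr i (Finset.mem_Icc.mp hi).1 ω).1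
    · simpa using Finset.sum_le_sum fun i hi => (hr i (Finset.mem_Icc.mp hi).1 ω).2
  exact ⟨div_nonneg hsum.1 hn'.le, (div_le_one hn').mpr hsum.2⟩

lemma measurable_pbar_ratingsAlg (n : ℕ) : Measurable[ratingsAlg r n] (pbar r n) := by
  have hr : ∀ i ∈ Finset.Icc 1 n, Measurable[ratingsAlg r n] (r i) := fun i hi =>
    measurable_iff_comap_le.mpr <| le_iSup₂ (f := fun i (_ : i ∈ Finset.Icc 1 n) =>
      MeasurableSpace.comap (r i) (inferInstance : MeasurableSpace ℝ)) i hi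
  exact (Finset.measurable_sum _ hr).div_const _

lemma ratingsAlg_le [mΩ : MeasurableSpace Ω] {r : ℕ → Ω → ℝ} (hr : ∀ i, Measurable (r i))
    (n : ℕ) : ratingsAlg r n ≤ mΩ :=
  iSup₂_le fun i _ => (hr i).comap_le

end SampleMean

section Moments

variable {Ω : Type*} {mΩ : MeasurableSpace Ω} {μ : Measure Ω} [IsProbabilityMeasure μ]

lemma variance_of_zero_or_one {Y : Ω → ℝ} (hY : Measurable Y) (h01 : ∀ ω, Y ω = 0 ∨ Y ω = 1) :
    Var[Y; μ] = μ[Y] * (1 - μ[Y]) := by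
  have hbdd : ∀ ω, ‖Y ω‖ ≤ 1 := fun ω => by rcases h01 ω with h | h <;> simp [h]
  have hsq : Y ^ 2 = Y := funext fun ω => by rcases h01 ω with h | h <;> simp [h]
  rw [variance_eq_sub (MemLp.of_bound hY.aestronglyMeasurable 1 (ae_of_all _ hbdd)), hsq]
  ring

variable {m : MeasurableSpace Ω} {X Y : Ω → ℝ} {a b : ℝ}

lemma integral_eq_of_condExp_eq_affine (hm : m ≤ mΩ) (hX : Integrable X μ)
    (hcond : μ[Y | m] =ᵐ[μ] fun ω => a + b * X ω) : μ[Y] = a + b * μ[X] := by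
  rw [← integral_condExp hm, integral_congr_ae hcond, integral_add (integrable_const a)
    (hX.const_mul b), integral_const_mul]
  simp

lemma covariance_eq_mul_variance_of_condExp_eq_affine (hm : m ≤ mΩ)
    (hXm : StronglyMeasurable[m] X) (hX : MemLp X 2 μ) (hY : MemLp Y 2 μ)
    (hcond : μ[Y | m] =ᵐ[μ] fun ω => a + b * X ω) : cov[X, Y; μ] = b * Var[X; μ] := by
  have hXY : μ[X * Y] = a * μ[X] + b * μ[X ^ 2] := by
    have hpull : μ[X * Y | m] =ᵐ[μ] fun ω => a * X ω + b * X ω ^ 2 :=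
      (condExp_mul_of_stronglyMeasurable_left hXm (hX.integrable_mul hY)
        (hY.integrable one_le_two)).trans <|
        (EventuallyEq.refl _ X).mul hcond |>.trans <| ae_of_all _ fun ω => by
          simp only [Pi.mul_apply]; ring
    rw [← integral_condExp hm, integral_congr_ae hpull, integral_add
      ((hX.integrable one_le_two).const_mul a) ((hX.integrable_sq).const_mul b),
      integral_const_mul, integral_const_mul]
    rfl
  rw [covariance_eq_sub hX hY, variance_eq_sub hX, hXY,
    integral_eq_of_condExp_eq_affine hm (hX.integrable one_le_two) hcond]
  ring

end Moments

namespace Bandwagon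

variable {Ω : Type*} [MeasurableSpace Ω] {μ : Measure Ω} {p : ℝ} {lam : ℕ → ℝ}
  {r : ℕ → Ω → ℝ}

lemma rating_mem_Icc (hbw : Bandwagon μ p lam r) {i : ℕ} (hi : 1 ≤ i) (ω : Ω) :
    r i ω ∈ Set.Icc (0 : ℝ) 1 := by
  rcases hbw.hbin i hi ω with h | h <;> simp [h]

lemma memLp_pbar (hbw : Bandwagon μ p lam r) (n : ℕ) : MemLp (pbar r n) 2 μ := by
  have := hbw.prob
  refine MemLp.of_bound ((measurable_pbar_ratingsAlg r n).mono (ratingsAlg_le hbw.hmeas n)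
    le_rfl).aestronglyMeasurable 1 (ae_of_all _ fun ω => ?_)
  obtain ⟨h0, h1⟩ := pbar_mem_Icc (fun i hi => hbw.rating_mem_Icc hi) n ω
  rw [Real.norm_eq_abs, abs_le]
  constructor <;> linarith

lemma memLp_rating (hbw : Bandwagon μ p lam r) {i : ℕ} (hi : 1 ≤ i) : MemLp (r i) 2 μ := by
  have := hbw.prob
  refine MemLp.of_bound (hbw.hmeas i).aestronglyMeasurable 1 (ae_of_all _ fun ω => ?_)
  rcases hbw.hbin i hi ω with h | h <;> simp [h]

lemma condExp_rating_succ (hbw : Bandwagon μ p lam r) {n : ℕ} (hn : 1 ≤ n) :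
    μ[r (n + 1) | ratingsAlg r n] =ᵐ[μ]
      fun ω => lam (n + 1) * p + (1 - lam (n + 1)) * pbar r n ω :=
  hbw.hcond (n + 1) (by omega)

lemma integral_rating_succ (hbw : Bandwagon μ p lam r) {n : ℕ} (hn : 1 ≤ n) :
    μ[r (n + 1)] = lam (n + 1) * p + (1 - lam (n + 1)) * μ[pbar r n] :=
  have := hbw.prob
  integral_eq_of_condExp_eq_affine (ratingsAlg_le hbw.hmeas n)
    ((hbw.memLp_pbar n).integrable one_le_two) (hbw.condExp_rating_succ hn)

lemma integral_pbar (hbw : Bandwagon μ p lam r) {n : ℕ} (hn : 1 ≤ n) : μ[pbar r n] = p := by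
  have := hbw.prob
  induction n, hn using Nat.le_induction with
  | base => rw [pbar_one, hbw.hfirst]
  | succ n hn ih =>
    simp only [pbar_succ, Pi.smul_apply, Pi.add_apply, smul_eq_mul]
    rw [integral_const_mul, integral_add (((hbw.memLp_pbar n).integrable one_le_two).const_mul _)
      ((hbw.memLp_rating (by omega)).integrable one_le_two), integral_const_mul,
      hbw.integral_rating_succ hn, ih]
    field_simp
    ring

lemma integral_rating (hbw : Bandwagon μ p lam r) {i : ℕ} (hi : 1 ≤ i) : μ[r i] = p := by
  obtain rfl | ⟨n, hn, rfl⟩ : i = 1 ∨ ∃ n, 1 ≤ n ∧ i = n + 1 :=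
    (eq_or_lt_of_le hi).imp Eq.symm fun h => ⟨i - 1, by omega, by omega⟩
  · exact hbw.hfirst
  · rw [hbw.integral_rating_succ hn, hbw.integral_pbar hn]
    ring

lemma variance_rating (hbw : Bandwagon μ p lam r) {i : ℕ} (hi : 1 ≤ i) :
    Var[r i; μ] = p * (1 - p) := by
  have := hbw.prob
  rw [variance_of_zero_or_one (hbw.hmeas i) (hbw.hbin i hi), hbw.integral_rating hi]

lemma covariance_pbar_rating_succ (hbw : Bandwagon μ p lam r) {n : ℕ} (hn : 1 ≤ n) :
    cov[pbar r n, r (n + 1); μ] = (1 - lam (n + 1)) * Var[pbar r n; μ] :=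
  have := hbw.prob
  covariance_eq_mul_variance_of_condExp_eq_affine (ratingsAlg_le hbw.hmeas n)
    (measurable_pbar_ratingsAlg r n).stronglyMeasurable (hbw.memLp_pbar n)
    (hbw.memLp_rating (by omega)) (hbw.condExp_rating_succ hn)

lemma variance_pbar_succ (hbw : Bandwagon μ p lam r) {n : ℕ} (hn : 1 ≤ n) :
    Var[pbar r (n + 1); μ] = (n : ℝ) * (n + 2 - 2 * lam (n + 1)) / ((n : ℝ) + 1) ^ 2
      * Var[pbar r n; μ] + p * (1 - p) / ((n : ℝ) + 1) ^ 2 := by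
  have := hbw.prob
  rw [pbar_succ, variance_smul, variance_add ((hbw.memLp_pbar n).const_smul _)
    (hbw.memLp_rating (by omega)), variance_smul, covariance_smul_left,
    hbw.covariance_pbar_rating_succ hn, hbw.variance_rating (by omega)]
  field_simp
  ring

end Bandwagon

theorem bandwagon_variance_recursion {Ω : Type*} [MeasurableSpace Ω] (μ : MeasureTheory.Measure Ω)
    (p : ℝ) (lam : ℕ → ℝ) (r : ℕ → Ω → ℝ)
    (hbw : Bandwagon μ p lam r) :
    variance (pbar r 1) μ = p * (1 - p) ∧
    ∀ n, 2 ≤ n →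
      variance (pbar r n) μ
        = ((n : ℝ) - 1) * ((n : ℝ) + 1 - 2 * lam n) / (n : ℝ) ^ 2
            * variance (pbar r (n - 1)) μ
          + p * (1 - p) / (n : ℝ) ^ 2 := by
  refine ⟨by rw [pbar_one, hbw.variance_rating le_rfl], fun n hn => ?_⟩
  obtain ⟨m, rfl⟩ : ∃ m, n = m + 1 := ⟨n - 1, by omega⟩
  rw [Nat.add_sub_cancel, hbw.variance_pbar_succ (by omega)]
  push_cast
  ring
end

section
/- Under the bandwagon rating process, for 1 ≤ m < n, the conditional bias of the sample mean satisfies E[p̄_n - p | p̄_m] = (p̄_m - p) · Π_{i=m+1}^{n} (1 - λ_i/i). -/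
open MeasureTheory ProbabilityTheory Finset Filter

/-!
Writing `bₙ = p̄ₙ - p`, one has `(n + 1) bₙ₊₁ = n bₙ + (rₙ₊₁ - p)`, and the bandwagon rule says
`E[rₙ₊₁ - p | r₁, …, rₙ] = (1 - λₙ₊₁) bₙ`. By the tower property, for every σ-algebra `𝒢`
coarser than `σ(r₁, …, rₙ)` this gives `E[bₙ₊₁ | 𝒢] = (1 - λₙ₊₁ / (n + 1)) E[bₙ | 𝒢]`.
Iterating from `n = m`, where `bₘ` is `𝒢`-measurable for `𝒢 = σ(p̄ₘ)`, yields the product.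
-/

section Ratings

variable {Ω : Type*} (r : ℕ → Ω → ℝ)

lemma pbar_succ_sub (p : ℝ) (n : ℕ) :
    (fun ω => pbar r (n + 1) ω - p) =
      ((n : ℝ) / (n + 1)) • (fun ω => pbar r n ω - p) +
        (1 / ((n : ℝ) + 1)) • (fun ω => r (n + 1) ω - p) := by
  funext ω
  simp only [Pi.add_apply, Pi.smul_apply, smul_eq_mul, pbar,
    sum_Icc_succ_top (Nat.le_add_left 1 n), Nat.cast_add, Nat.cast_one]
  rcases n.eq_zero_or_pos with rfl | hn
  · simp
  · have : (n : ℝ) ≠ 0 := by positivity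
    field_simp
    ring

lemma ratingsAlg_mono {m n : ℕ} (h : m ≤ n) : ratingsAlg r m ≤ ratingsAlg r n :=
  biSup_mono fun _ hi => Icc_subset_Icc_right h hi

lemma measurable_rating_ratingsAlg {i n : ℕ} (hi : i ∈ Icc 1 n) :
    Measurable[ratingsAlg r n] (r i) :=
  (comap_measurable (r i)).mono
    (le_iSup₂ (f := fun i (_ : i ∈ Icc 1 n) => MeasurableSpace.comap (r i) inferInstance) i hi)
    le_rfl

end Ratings

namespace Bandwagon

variable {Ω : Type*} {𝒢 mΩ : MeasurableSpace Ω} {μ : Measure Ω} {p : ℝ} {lam : ℕ → ℝ}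
  {r : ℕ → Ω → ℝ}

lemma ratingsAlg_le (hbw : Bandwagon μ p lam r) (n : ℕ) : ratingsAlg r n ≤ mΩ :=
  iSup₂_le fun i _ => (hbw.hmeas i).comap_le

lemma integrable_rating (hbw : Bandwagon μ p lam r) {n : ℕ} (hn : 1 ≤ n) :
    Integrable (r n) μ := by
  have := hbw.prob
  refine (integrable_const (1 : ℝ)).mono' (hbw.hmeas n).aestronglyMeasurable
    (Eventually.of_forall fun ω => ?_)
  rcases hbw.hbin n hn ω with h | h <;> simp [h]

lemma integrable_pbar (hbw : Bandwagon μ p lam r) (n : ℕ) : Integrable (pbar r n) μ :=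
  (integrable_finsetSum _ fun _ hi => hbw.integrable_rating (mem_Icc.mp hi).1).div_const _

lemma integrable_rating_sub (hbw : Bandwagon μ p lam r) {n : ℕ} (hn : 1 ≤ n) :
    Integrable (fun ω => r n ω - p) μ :=
  have := hbw.prob
  (hbw.integrable_rating hn).sub (integrable_const p)

lemma integrable_pbar_sub (hbw : Bandwagon μ p lam r) (n : ℕ) :
    Integrable (fun ω => pbar r n ω - p) μ :=
  have := hbw.prob
  (hbw.integrable_pbar n).sub (integrable_const p)

lemma condExp_rating_succ_sub_ratingsAlg (hbw : Bandwagon μ p lam r) {n : ℕ} (hn : 1 ≤ n) :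
    μ[fun ω => r (n + 1) ω - p | ratingsAlg r n] =ᵐ[μ]
      (1 - lam (n + 1)) • fun ω => pbar r n ω - p := by
  have := hbw.prob
  have hcond := hbw.hcond (n + 1) (by omega)
  rw [Nat.add_sub_cancel] at hcond
  calc μ[fun ω => r (n + 1) ω - p | ratingsAlg r n]
      =ᵐ[μ] μ[r (n + 1) | ratingsAlg r n] - μ[fun _ => p | ratingsAlg r n] :=
        condExp_sub (hbw.integrable_rating (by omega)) (integrable_const p) _
    _ =ᵐ[μ] (1 - lam (n + 1)) • fun ω => pbar r n ω - p := by
        rw [condExp_const (hbw.ratingsAlg_le n)]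
        filter_upwards [hcond] with ω hω
        simp only [Pi.sub_apply, hω, Pi.smul_apply, smul_eq_mul]
        ring

lemma condExp_rating_succ_sub (hbw : Bandwagon μ p lam r) {n : ℕ} (hn : 1 ≤ n)
    (h𝒢 : 𝒢 ≤ ratingsAlg r n) :
    μ[fun ω => r (n + 1) ω - p | 𝒢] =ᵐ[μ]
      (1 - lam (n + 1)) • μ[fun ω => pbar r n ω - p | 𝒢] :=
  have := hbw.prob
  calc μ[fun ω => r (n + 1) ω - p | 𝒢]
      =ᵐ[μ] μ[μ[fun ω => r (n + 1) ω - p | ratingsAlg r n] | 𝒢] :=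
        (condExp_condExp_of_le h𝒢 (hbw.ratingsAlg_le n)).symm
    _ =ᵐ[μ] μ[(1 - lam (n + 1)) • fun ω => pbar r n ω - p | 𝒢] :=
        condExp_congr_ae (hbw.condExp_rating_succ_sub_ratingsAlg hn)
    _ =ᵐ[μ] (1 - lam (n + 1)) • μ[fun ω => pbar r n ω - p | 𝒢] := condExp_smul _ _ _

lemma condExp_pbar_succ_sub (hbw : Bandwagon μ p lam r) {n : ℕ} (hn : 1 ≤ n)
    (h𝒢 : 𝒢 ≤ ratingsAlg r n) :
    μ[fun ω => pbar r (n + 1) ω - p | 𝒢] =ᵐ[μ]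
      (1 - lam (n + 1) / (n + 1)) • μ[fun ω => pbar r n ω - p | 𝒢] := by
  have hsplit := condExp_add ((hbw.integrable_pbar_sub n).smul ((n : ℝ) / (n + 1)))
    ((hbw.integrable_rating_sub (Nat.le_add_left 1 n)).smul (1 / ((n : ℝ) + 1))) 𝒢
  rw [← pbar_succ_sub] at hsplit
  filter_upwards [hsplit, condExp_smul ((n : ℝ) / (n + 1)) (fun ω => pbar r n ω - p) 𝒢,
    condExp_smul (1 / ((n : ℝ) + 1)) (fun ω => r (n + 1) ω - p) 𝒢,
    hbw.condExp_rating_succ_sub hn h𝒢] with ω h h₁ h₂ h₃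
  simp only [h, Pi.add_apply, h₁, h₂, Pi.smul_apply, h₃, smul_eq_mul]
  field_simp
  ring

lemma condExp_pbar_sub (hbw : Bandwagon μ p lam r) {m : ℕ} (hm : 1 ≤ m)
    (h𝒢 : 𝒢 ≤ ratingsAlg r m) (hpbar : Measurable[𝒢] (pbar r m)) {n : ℕ} (hmn : m ≤ n) :
    μ[fun ω => pbar r n ω - p | 𝒢] =ᵐ[μ]
      fun ω => (pbar r m ω - p) * ∏ i ∈ Icc (m + 1) n, (1 - lam i / (i : ℝ)) := by
  induction n, hmn using Nat.le_induction with
  | base =>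
    have := hbw.prob
    rw [condExp_of_stronglyMeasurable (h𝒢.trans (hbw.ratingsAlg_le m))
      (hpbar.sub_const p).stronglyMeasurable (hbw.integrable_pbar_sub m)]
    simp
  | succ n hmn ih =>
    filter_upwards [hbw.condExp_pbar_succ_sub (hm.trans hmn) (h𝒢.trans (ratingsAlg_mono r hmn)),
      ih] with ω h hω
    rw [h, Pi.smul_apply, hω, prod_Icc_succ_top (Nat.succ_le_succ hmn), smul_eq_mul]
    push_cast
    ring

end Bandwagon

theorem bandwagon_conditional_bias_sample_mean {Ω : Type*} [MeasurableSpace Ω] (μ : MeasureTheory.Measure Ω)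
    (p : ℝ) (lam : ℕ → ℝ) (r : ℕ → Ω → ℝ)
    (hbw : Bandwagon μ p lam r) :
    ∀ m n, 1 ≤ m → m < n →
      μ[fun ω => pbar r n ω - p |
        MeasurableSpace.comap (pbar r m) (inferInstance : MeasurableSpace ℝ)]
        =ᵐ[μ] fun ω => (pbar r m ω - p) *
          ∏ i ∈ Finset.Icc (m + 1) n, (1 - lam i / (i : ℝ)) := by
  intro m n hm hmn
  exact hbw.condExp_pbar_sub hm (measurable_pbar_ratingsAlg r m).comap_le
    (comap_measurable (pbar r m)) hmn.le
end
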